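/- For every complete metric space (X,d) there exists C ≥ 0 such that Con(X) is C-roughly geodesic: any two points p, q ∈ X × (0,∞) are joined by a C-rough geodesic ξ : [0, d_Con(p,q)] → Con(X) with ξ(0) = p and ξ(d_Con(p,q)) = q. -/

import Mathlib

/-- The Bonk–Schramm cone distance on `X × (0,∞)`. -/
noncomputable def dCon {X : Type*} [MetricSpace X] (p q : X × ℝ) : ℝ :=
  2 * Real.log ((dist p.1 q.1 + max p.2 q.2) / Real.sqrt (p.2 * q.2))

/-!
Write `h = d(x, y) + max(t, t')` for `p = (x, t)`, `q = (y, t')`, so that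
`d_Con(p, q) = log (h / t) + log (h / t')`. The rough geodesic climbs vertically from `p` to
height `h` (a true geodesic, since `d_Con((x, t), (x, t')) = |log t - log t'|`), jumps across to
`(y, h)`, and descends vertically to `q`. Its two vertical legs meet at height `h ≥ d(x, y)`,
so the cone distance between points on different legs exceeds their parameter difference by at
most `2 log 2`. The lower bound with error `4 log 2` then follows from the triangle inequality
for `d_Con`, applied to the endpoints `p` and `q`.
-/

open Real

lemma log_mul_exp {t : ℝ} (ht : 0 < t) (s : ℝ) : log (t * exp s) = log t + s := by
  rw [log_mul ht.ne' (exp_pos s).ne', log_exp]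

section Cone

variable {X : Type*} [MetricSpace X]

lemma dCon_comm (p q : X × ℝ) : dCon p q = dCon q p := by
  unfold dCon
  rw [dist_comm, max_comm p.2 q.2, mul_comm p.2 q.2]

/-- The height at which the rough geodesic from `p` to `q` crosses over. -/
noncomputable def conePeak (p q : X × ℝ) : ℝ := dist p.1 q.1 + max p.2 q.2

lemma le_conePeak_left (p q : X × ℝ) : p.2 ≤ conePeak p q :=
  (le_max_left _ _).trans (le_add_of_nonneg_left dist_nonneg)

lemma le_conePeak_right (p q : X × ℝ) : q.2 ≤ conePeak p q :=
  (le_max_right _ _).trans (le_add_of_nonneg_left dist_nonneg)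

lemma dCon_eq {p q : X × ℝ} (hp : 0 < p.2) (hq : 0 < q.2) :
    dCon p q = 2 * log (conePeak p q) - log p.2 - log q.2 := by
  have hpeak : 0 < conePeak p q := hp.trans_le (le_conePeak_left p q)
  rw [dCon, ← conePeak, log_div hpeak.ne' (sqrt_ne_zero'.2 (by positivity)),
    log_sqrt (by positivity), log_mul hp.ne' hq.ne']
  ring

lemma dCon_same_fst (x : X) {t t' : ℝ} (ht : 0 < t) (ht' : 0 < t') :
    dCon (x, t) (x, t') = |log t - log t'| := by
  rw [dCon_eq ht ht', conePeak, dist_self, zero_add]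
  rcases le_total t t' with hle | hle
  · rw [max_eq_right hle, abs_of_nonpos (by linarith [log_le_log ht hle])]
    ring
  · rw [max_eq_left hle, abs_of_nonneg (by linarith [log_le_log ht' hle])]
    ring

lemma dCon_le_of_dist_le {x y : X} {t t' h : ℝ} (ht : 0 < t) (ht' : 0 < t')
    (hd : dist x y ≤ h) (hth : t ≤ h) (hth' : t' ≤ h) :
    dCon (x, t) (y, t') ≤ (log h - log t) + (log h - log t') + 2 * log 2 := by
  have hpeak : conePeak (x, t) (y, t') ≤ 2 * h := by
    have := max_le hth hth'
    simp only [conePeak]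
    linarith
  have hlog : log (conePeak (x, t) (y, t')) ≤ log 2 + log h := by
    rw [← log_mul two_ne_zero (ht.trans_le hth).ne']
    exact log_le_log (ht.trans_le (le_conePeak_left (x, t) (y, t'))) hpeak
  rw [dCon_eq ht ht']
  linarith

lemma mul_le_conePeak_mul_conePeak {p q r : X × ℝ} (hq : 0 < q.2) :
    conePeak p r * q.2 ≤ conePeak p q * conePeak q r := by
  obtain ⟨x, a⟩ := p
  obtain ⟨y, b⟩ := q
  obtain ⟨z, c⟩ := r
  have hmax : b * max a c ≤ max a b * max b c := by
    have hbc : 0 ≤ max b c := hq.le.trans (le_max_left b c)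
    rcases le_total a c with hac | hac
    · rw [max_eq_right hac]
      exact (mul_le_mul_of_nonneg_left (le_max_right b c) hq.le).trans
        (mul_le_mul_of_nonneg_right (le_max_right a b) hbc)
    · rw [max_eq_left hac, mul_comm (max a b)]
      exact (mul_le_mul_of_nonneg_left (le_max_left a b) hq.le).trans
        (mul_le_mul_of_nonneg_right (le_max_left b c) (hq.le.trans (le_max_right a b)))
  have hdist : dist x z * b ≤ dist x y * max b c + dist y z * max a b := by
    have := mul_le_mul_of_nonneg_right (dist_triangle x y z) hq.le
    nlinarith [mul_le_mul_of_nonneg_left (le_max_left b c) (dist_nonneg (x := x) (y := y)),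
      mul_le_mul_of_nonneg_left (le_max_right a b) (dist_nonneg (x := y) (y := z))]
  have hprod : 0 ≤ dist x y * dist y z := mul_nonneg dist_nonneg dist_nonneg
  simp only [conePeak]
  nlinarith

lemma dCon_triangle {p q r : X × ℝ} (hp : 0 < p.2) (hq : 0 < q.2) (hr : 0 < r.2) :
    dCon p r ≤ dCon p q + dCon q r := by
  have hpeak := mul_le_conePeak_mul_conePeak (p := p) (r := r) hq
  have hpr : 0 < conePeak p r := hp.trans_le (le_conePeak_left p r)
  have hlog := log_le_log (by positivity) hpeak
  rw [log_mul hpr.ne' hq.ne', log_mul (hp.trans_le (le_conePeak_left p q)).ne'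
    (hq.trans_le (le_conePeak_left q r)).ne'] at hlog
  rw [dCon_eq hp hr, dCon_eq hp hq, dCon_eq hq hr]
  linarith

noncomputable def conePath (p q : X × ℝ) (s : ℝ) : X × ℝ :=
  if s ≤ log (conePeak p q) - log p.2 then (p.1, p.2 * exp s)
  else (q.1, q.2 * exp (dCon p q - s))

variable {p q : X × ℝ}

lemma conePath_snd_pos (hp : 0 < p.2) (hq : 0 < q.2) (s : ℝ) : 0 < (conePath p q s).2 := by
  unfold conePath
  split_ifs <;> positivity

lemma conePath_zero (hp : 0 < p.2) : conePath p q 0 = p := by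
  have : 0 ≤ log (conePeak p q) - log p.2 := sub_nonneg.2 (log_le_log hp (le_conePeak_left p q))
  simp [conePath, this]

lemma conePath_dCon (hp : 0 < p.2) (hq : 0 < q.2) : conePath p q (dCon p q) = q := by
  have hpeak : 0 < conePeak p q := hp.trans_le (le_conePeak_left p q)
  have hD := dCon_eq hp hq
  unfold conePath
  split_ifs with hle
  · have hlog : log (conePeak p q) = log q.2 := by
      linarith [log_le_log hq (le_conePeak_right p q)]
    have hpeak_eq : conePeak p q = q.2 := log_injOn_pos hpeak hq hlog
    have hdist : dist p.1 q.1 = 0 := by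
      have := le_max_right p.2 q.2
      have := dist_nonneg (x := p.1) (y := q.1)
      rw [conePeak] at hpeak_eq
      linarith
    rw [dist_eq_zero.1 hdist, hD, show 2 * log (conePeak p q) - log p.2 - log q.2
      = log (conePeak p q) - log p.2 by linarith, exp_sub, exp_log hpeak, exp_log hp,
      mul_div_cancel₀ _ hp.ne', hpeak_eq]
  · simp

lemma dCon_conePath_le_of_le_of_lt (hp : 0 < p.2) (hq : 0 < q.2) {s s' : ℝ}
    (hs : s ≤ log (conePeak p q) - log p.2) (hs' : log (conePeak p q) - log p.2 < s') :
    dCon (conePath p q s) (conePath p q s') ≤ |s - s'| + 2 * log 2 := by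
  have hpeak : 0 < conePeak p q := hp.trans_le (le_conePeak_left p q)
  have hD := dCon_eq hp hq
  have hle_peak : ∀ {t : ℝ} (r : ℝ), 0 < t → log t + r ≤ log (conePeak p q) →
      t * exp r ≤ conePeak p q := fun r ht h ↦
    (log_le_log_iff (by positivity) hpeak).1 (by rwa [log_mul_exp ht])
  have hdist : dist p.1 q.1 ≤ conePeak p q :=
    le_add_of_nonneg_right (hp.le.trans (le_max_left _ _))
  simp only [conePath, if_pos hs, if_neg hs'.not_ge]
  have := dCon_le_of_dist_le (by positivity) (by positivity) hdist (hle_peak s hp (by linarith))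
    (hle_peak (dCon p q - s') hq (by linarith))
  rw [log_mul_exp hp, log_mul_exp hq] at this
  rw [abs_of_nonpos (by linarith)]
  linarith

lemma dCon_conePath_le (hp : 0 < p.2) (hq : 0 < q.2) (s s' : ℝ) :
    dCon (conePath p q s) (conePath p q s') ≤ |s - s'| + 2 * log 2 := by
  have hlog2 : 0 ≤ log 2 := log_nonneg one_le_two
  rcases le_or_gt s (log (conePeak p q) - log p.2) with hs | hs <;>
    rcases le_or_gt s' (log (conePeak p q) - log p.2) with hs' | hs'
  · rw [conePath, conePath, if_pos hs, if_pos hs', dCon_same_fst _ (by positivity) (by positivity),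
      log_mul_exp hp, log_mul_exp hp, add_sub_add_left_eq_sub]
    linarith
  · exact dCon_conePath_le_of_le_of_lt hp hq hs hs'
  · rw [dCon_comm, abs_sub_comm]
    exact dCon_conePath_le_of_le_of_lt hp hq hs' hs
  · rw [conePath, conePath, if_neg hs.not_ge, if_neg hs'.not_ge, dCon_same_fst _ (by positivity) (by positivity), log_mul_exp hq, log_mul_exp hq,
      add_sub_add_left_eq_sub, sub_sub_sub_cancel_left, abs_sub_comm]
    linarith

lemma sub_le_dCon_of_dCon_le {ξ : ℝ → X × ℝ} {c : ℝ}
    (hpos : ∀ s ∈ Set.Icc 0 (dCon p q), 0 < (ξ s).2) (h0 : ξ 0 = p) (hD : ξ (dCon p q) = q)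
    (hle : ∀ s ∈ Set.Icc 0 (dCon p q), ∀ s' ∈ Set.Icc 0 (dCon p q),
      dCon (ξ s) (ξ s') ≤ |s - s'| + c)
    {s s' : ℝ} (hs : s ∈ Set.Icc 0 (dCon p q)) (hs' : s' ∈ Set.Icc 0 (dCon p q)) :
    |s - s'| - 2 * c ≤ dCon (ξ s) (ξ s') := by
  wlog hss' : s ≤ s' generalizing s s'
  · rw [abs_sub_comm, dCon_comm]
    exact this hs' hs (le_of_not_ge hss')
  have h0mem : (0 : ℝ) ∈ Set.Icc 0 (dCon p q) := ⟨le_rfl, hs.1.trans hs.2⟩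
  have hDmem : dCon p q ∈ Set.Icc 0 (dCon p q) := ⟨hs.1.trans hs.2, le_rfl⟩
  have hp : 0 < p.2 := h0 ▸ hpos 0 h0mem
  have hq : 0 < q.2 := hD ▸ hpos _ hDmem
  have hps : dCon p (ξ s) ≤ s + c := by
    simpa [h0, abs_of_nonneg hs.1] using hle 0 h0mem s hs
  have hs'q : dCon (ξ s') q ≤ dCon p q - s' + c := by
    simpa [hD, abs_of_nonpos (sub_nonpos.2 hs'.2)] using hle s' hs' (dCon p q) hDmem
  have := dCon_triangle hp (hpos s hs) hq
  have := dCon_triangle (hpos s hs) (hpos s' hs') hq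
  rw [abs_of_nonpos (sub_nonpos.2 hss')]
  linarith

end Cone

theorem stmt_4_general {X : Type*} [MetricSpace X] :
    ∃ C : ℝ, 0 ≤ C ∧ ∀ p q : X × ℝ, 0 < p.2 → 0 < q.2 →
      ∃ ξ : ℝ → X × ℝ,
        ξ 0 = p ∧ ξ (dCon p q) = q ∧
        (∀ s ∈ Set.Icc (0 : ℝ) (dCon p q), 0 < (ξ s).2) ∧
        (∀ s ∈ Set.Icc (0 : ℝ) (dCon p q), ∀ s' ∈ Set.Icc (0 : ℝ) (dCon p q),
          |s - s'| - C ≤ dCon (ξ s) (ξ s') ∧ dCon (ξ s) (ξ s') ≤ |s - s'| + C) := by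
  have hlog2 : 0 ≤ log 2 := log_nonneg one_le_two
  refine ⟨4 * log 2, by positivity, fun p q hp hq ↦ ⟨conePath p q, conePath_zero hp,
    conePath_dCon hp hq, fun s _ ↦ conePath_snd_pos hp hq s, fun s hs s' hs' ↦ ⟨?_, ?_⟩⟩⟩
  · have := sub_le_dCon_of_dCon_le (fun s _ ↦ conePath_snd_pos hp hq s) (conePath_zero hp)
      (conePath_dCon hp hq) (fun s _ s' _ ↦ dCon_conePath_le hp hq s s') hs hs'
    linarith
  · linarith [dCon_conePath_le hp hq s s']

/-- For every complete metric space `(X,d)` there exists `C ≥ 0` such that `Con(X)` is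
`C`-roughly geodesic: any two points `p, q ∈ X × (0,∞)` are joined by a `C`-rough geodesic
`ξ : [0, d_Con(p,q)] → Con(X)` with `ξ(0) = p` and `ξ(d_Con(p,q)) = q`. -/
theorem stmt_4 {X : Type*} [MetricSpace X] [CompleteSpace X] :
    ∃ C : ℝ, 0 ≤ C ∧ ∀ p q : X × ℝ, 0 < p.2 → 0 < q.2 →
      ∃ ξ : ℝ → X × ℝ,
        ξ 0 = p ∧ ξ (dCon p q) = q ∧
        (∀ s ∈ Set.Icc (0 : ℝ) (dCon p q), 0 < (ξ s).2) ∧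
        (∀ s ∈ Set.Icc (0 : ℝ) (dCon p q), ∀ s' ∈ Set.Icc (0 : ℝ) (dCon p q),
          |s - s'| - C ≤ dCon (ξ s) (ξ s') ∧ dCon (ξ s) (ξ s') ≤ |s - s'| + C) :=
  stmt_4_general
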